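/- Let φ be a nontrivial elliptic finite Blaschke product and let f be a function in the disk algebra A(𝔻) which is not identically zero. Then for every integer k ≥ 1, liminf_{n→∞} ( sup_{x ∈ 𝕋} ∏_{j=0}^{n−1} |f(φ^{kj}(x))| )^{1/n} > 0. -/

import Mathlib

/-! Write `f = (z - z₀)ˢ g` with `g ∈ A(𝔻)` and `g(z₀) ≠ 0`, where `z₀ ∈ 𝔻` is the fixed point
of `φ`. Applied to `G = ∏_{j<n} g ∘ φ^{kj}`, which satisfies `G(z₀) = g(z₀)ⁿ`, the maximum
modulus principle gives `x ∈ 𝕋` with `|g(z₀)|ⁿ ≤ ∏_{j<n} |g(φ^{kj}(x))|`. Since the orbit of `x`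
stays on `𝕋`, each factor satisfies `|f| ≥ (1 - |z₀|)ˢ |g|` there, so the supremum is at least
`cⁿ` with `c = (1 - |z₀|)ˢ |g(z₀)| > 0`; it is also at most `(sup |f|)ⁿ`. -/

open Filter Metric Set

noncomputable section

/-- `φ` is a finite Blaschke product with `N` factors. -/
def IsBlaschkeOf (N : ℕ) (φ : ℂ → ℂ) : Prop :=
  ∃ (u : ℂ) (a : Fin N → ℂ), ‖u‖ = 1 ∧ (∀ i, ‖a i‖ < 1) ∧
    ∀ z : ℂ, φ z = u * ∏ i, (z - a i) / (1 - (starRingEnd ℂ) (a i) * z)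

/-- `φ` is a nontrivial finite Blaschke product (at least two factors). -/
def NontrivialBlaschke (φ : ℂ → ℂ) : Prop := ∃ N : ℕ, 2 ≤ N ∧ IsBlaschkeOf N φ

/-- `φ` is elliptic: it has a fixed point in the open unit disk. -/
def Elliptic (φ : ℂ → ℂ) : Prop := ∃ z ∈ ball (0 : ℂ) 1, φ z = z

/-- `φ` is parabolic with (Denjoy–Wolff) fixed point `z₀ ∈ 𝕋`, `φ'(z₀) = 1`. -/
def ParabolicAt (φ : ℂ → ℂ) (z₀ : ℂ) : Prop :=
  z₀ ∈ sphere (0 : ℂ) 1 ∧ φ z₀ = z₀ ∧ deriv φ z₀ = 1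

def Parabolic (φ : ℂ → ℂ) : Prop := ∃ z₀ : ℂ, ParabolicAt φ z₀

/-- `φ` is hyperbolic with (Denjoy–Wolff) fixed point `z₀ ∈ 𝕋`, `0 < φ'(z₀) < 1`. -/
def HyperbolicAt (φ : ℂ → ℂ) (z₀ : ℂ) : Prop :=
  z₀ ∈ sphere (0 : ℂ) 1 ∧ φ z₀ = z₀ ∧ ∃ c : ℝ, 0 < c ∧ c < 1 ∧ deriv φ z₀ = (c : ℂ)

def Hyperbolic (φ : ℂ → ℂ) : Prop := ∃ z₀ : ℂ, HyperbolicAt φ z₀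

/-- The hyperbolic (pseudo-)distance on the unit disk. -/
def hypDist (z w : ℂ) : ℝ :=
  Real.log ((1 + ‖z - w‖ / ‖1 - (starRingEnd ℂ) z * w‖) /
    (1 - ‖z - w‖ / ‖1 - (starRingEnd ℂ) z * w‖))

/-- `φ` has zero hyperbolic step. -/
def ZeroHypStep (φ : ℂ → ℂ) : Prop :=
  ∃ z ∈ ball (0 : ℂ) 1,
    Tendsto (fun n : ℕ => hypDist (φ^[n] z) (φ^[n + 1] z)) atTop (nhds 0)

/-- `φ` has positive hyperbolic step. -/
def PosHypStep (φ : ℂ → ℂ) : Prop :=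
  ∀ z ∈ ball (0 : ℂ) 1,
    ¬ Tendsto (fun n : ℕ => hypDist (φ^[n] z) (φ^[n + 1] z)) atTop (nhds 0)

/-- `z` is a recurrent point of `φ` on the unit circle. -/
def RecurrentPt (φ : ℂ → ℂ) (z : ℂ) : Prop :=
  z ∈ sphere (0 : ℂ) 1 ∧ ∃ n : ℕ → ℕ, StrictMono n ∧ (∀ k, 0 < n k) ∧
    Tendsto (fun k => φ^[n k] z) atTop (nhds z)

/-- `f` belongs to the disk algebra `A(𝔻)`. -/
def MemDiskAlgebra (f : ℂ → ℂ) : Prop :=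
  ContinuousOn f (closedBall (0 : ℂ) 1) ∧ DifferentiableOn ℂ f (ball (0 : ℂ) 1)

/-- Normalized Lebesgue measure on the unit circle, viewed as a Borel measure on `ℂ`:
the pushforward of Lebesgue measure on `[0,1)` under `t ↦ exp(2πit)`. -/
def circleMeasure : MeasureTheory.Measure ℂ :=
  MeasureTheory.Measure.map (fun t : ℝ => Complex.exp (2 * Real.pi * Complex.I * (t : ℂ)))
    (MeasureTheory.volume.restrict (Set.Ico (0 : ℝ) 1))

open Function Finset

namespace MemDiskAlgebra

variable {f : ℂ → ℂ}

theorem finsetProd {ι : Type*} {t : Finset ι} {F : ι → ℂ → ℂ}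
    (hF : ∀ i ∈ t, MemDiskAlgebra (F i)) : MemDiskAlgebra (fun z => ∏ i ∈ t, F i z) :=
  ⟨continuousOn_finsetProd t fun i hi => (hF i hi).1,
    DifferentiableOn.fun_finsetProd fun i hi => (hF i hi).2⟩

theorem dslope (hf : MemDiskAlgebra f) {z₀ : ℂ} (hz₀ : z₀ ∈ ball (0 : ℂ) 1) :
    MemDiskAlgebra (dslope f z₀) :=
  ⟨(continuousOn_dslope (closedBall_mem_nhds_of_mem hz₀)).2
      ⟨hf.1, hf.2.differentiableAt (isOpen_ball.mem_nhds hz₀)⟩,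
    (Complex.differentiableOn_dslope (isOpen_ball.mem_nhds hz₀)).2 hf.2⟩

theorem not_eventually_eq_zero (hf : MemDiskAlgebra f)
    (hne : ∃ z ∈ closedBall (0 : ℂ) 1, f z ≠ 0) {z₀ : ℂ} (hz₀ : z₀ ∈ ball (0 : ℂ) 1) :
    ¬ ∀ᶠ z in nhds z₀, f z = 0 := by
  intro hzero
  obtain ⟨z, hz, hfz⟩ := hne
  have hball : EqOn f 0 (ball (0 : ℂ) 1) :=
    (hf.2.analyticOnNhd isOpen_ball).eqOn_zero_of_preconnected_of_eventuallyEq_zero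
      (convex_ball (0 : ℂ) 1).isPreconnected hz₀ hzero
  have hclosedBall : EqOn f 0 (closedBall (0 : ℂ) 1) :=
    hball.of_subset_closure hf.1 continuousOn_const ball_subset_closedBall
      (closure_ball (0 : ℂ) one_ne_zero).ge
  exact hfz (hclosedBall hz)

theorem exists_eq_pow_mul (hf : MemDiskAlgebra f) (hne : ∃ z ∈ closedBall (0 : ℂ) 1, f z ≠ 0)
    {z₀ : ℂ} (hz₀ : z₀ ∈ ball (0 : ℂ) 1) :
    ∃ (s : ℕ) (g : ℂ → ℂ), MemDiskAlgebra g ∧ g z₀ ≠ 0 ∧ ∀ z, f z = (z - z₀) ^ s * g z := by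
  obtain ⟨p, hp⟩ := hf.2.analyticAt (isOpen_ball.mem_nhds hz₀)
  have hdslope : ∀ n, MemDiskAlgebra ((swap _root_.dslope z₀)^[n] f) := by
    intro n
    induction n with
    | zero => exact hf
    | succ n ih => rw [iterate_succ_apply']; exact ih.dslope hz₀
  refine ⟨p.order, _, hdslope p.order, hp.iterate_dslope_fslope_ne_zero ?_,
    hp.eq_pow_order_mul_iterate_dslope⟩
  exact mt hp.locally_zero_iff.2 (hf.not_eventually_eq_zero hne hz₀)

theorem exists_mem_sphere_norm_le (hf : MemDiskAlgebra f) {z : ℂ}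
    (hz : z ∈ closedBall (0 : ℂ) 1) : ∃ x ∈ sphere (0 : ℂ) 1, ‖f z‖ ≤ ‖f x‖ := by
  have hcl : DiffContOnCl ℂ f (ball (0 : ℂ) 1) :=
    ⟨hf.2, by rw [closure_ball (0 : ℂ) one_ne_zero]; exact hf.1⟩
  obtain ⟨x, hx, hmax⟩ := Complex.exists_mem_frontier_isMaxOn_norm isBounded_ball
    ⟨0, mem_ball_self one_pos⟩ hcl
  rw [frontier_ball (0 : ℂ) one_ne_zero] at hx
  rw [closure_ball (0 : ℂ) one_ne_zero] at hmax
  exact ⟨x, hx, hmax hz⟩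

end MemDiskAlgebra

structure IsDiskSelfMap (ψ : ℂ → ℂ) : Prop where
  memDiskAlgebra : MemDiskAlgebra ψ
  mapsTo_ball : MapsTo ψ (ball (0 : ℂ) 1) (ball (0 : ℂ) 1)
  mapsTo_sphere : MapsTo ψ (sphere (0 : ℂ) 1) (sphere (0 : ℂ) 1)

namespace IsDiskSelfMap

variable {ψ χ : ℂ → ℂ}

theorem mapsTo_closedBall (hψ : IsDiskSelfMap ψ) :
    MapsTo ψ (closedBall (0 : ℂ) 1) (closedBall (0 : ℂ) 1) := by
  rw [← ball_union_sphere]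
  exact hψ.mapsTo_ball.union_union hψ.mapsTo_sphere

theorem _root_.MemDiskAlgebra.comp {f : ℂ → ℂ} (hf : MemDiskAlgebra f) (hψ : IsDiskSelfMap ψ) :
    MemDiskAlgebra (f ∘ ψ) :=
  ⟨hf.1.comp hψ.memDiskAlgebra.1 hψ.mapsTo_closedBall,
    hf.2.comp hψ.memDiskAlgebra.2 hψ.mapsTo_ball⟩

theorem comp (hψ : IsDiskSelfMap ψ) (hχ : IsDiskSelfMap χ) : IsDiskSelfMap (ψ ∘ χ) :=
  ⟨hψ.memDiskAlgebra.comp hχ, hψ.mapsTo_ball.comp hχ.mapsTo_ball,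
    hψ.mapsTo_sphere.comp hχ.mapsTo_sphere⟩

theorem id : IsDiskSelfMap id :=
  ⟨⟨continuousOn_id, differentiableOn_id⟩, mapsTo_id _, mapsTo_id _⟩

theorem iterate (hψ : IsDiskSelfMap ψ) (n : ℕ) : IsDiskSelfMap ψ^[n] := by
  induction n with
  | zero => exact .id
  | succ n ih => rw [iterate_succ']; exact hψ.comp ih

end IsDiskSelfMap

def blaschkeFactor (a z : ℂ) : ℂ := (z - a) / (1 - starRingEnd ℂ a * z)

section BlaschkeFactor

variable {a z : ℂ}

theorem sq_norm_one_sub_conj_mul_sub_sq_norm_sub (a z : ℂ) :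
    ‖1 - starRingEnd ℂ a * z‖ ^ 2 - ‖z - a‖ ^ 2 = (1 - ‖a‖ ^ 2) * (1 - ‖z‖ ^ 2) := by
  simp only [← Complex.normSq_eq_norm_sq, Complex.normSq_apply, Complex.sub_re, Complex.sub_im,
    Complex.mul_re, Complex.mul_im, Complex.one_re, Complex.one_im, Complex.conj_re,
    Complex.conj_im]
  ring

theorem one_sub_conj_mul_ne_zero (ha : ‖a‖ < 1) (hz : ‖z‖ ≤ 1) : 1 - starRingEnd ℂ a * z ≠ 0 := by
  refine sub_ne_zero.2 fun h => ?_
  have : ‖starRingEnd ℂ a * z‖ < 1 := by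
    rw [norm_mul, Complex.norm_conj]
    exact (mul_le_of_le_one_right (norm_nonneg a) hz).trans_lt ha
  rw [← h, norm_one] at this
  exact this.false

theorem norm_blaschkeFactor_le_one (ha : ‖a‖ < 1) (hz : ‖z‖ ≤ 1) : ‖blaschkeFactor a z‖ ≤ 1 := by
  rw [blaschkeFactor, norm_div, div_le_one (norm_pos_iff.2 (one_sub_conj_mul_ne_zero ha hz)),
    ← pow_le_pow_iff_left₀ (norm_nonneg _) (norm_nonneg _) two_ne_zero]
  have hz2 : 0 ≤ 1 - ‖z‖ ^ 2 := by nlinarith [norm_nonneg z]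
  have ha2 : 0 ≤ 1 - ‖a‖ ^ 2 := by nlinarith [norm_nonneg a]
  linarith [sq_norm_one_sub_conj_mul_sub_sq_norm_sub a z, mul_nonneg ha2 hz2]

theorem norm_blaschkeFactor_lt_one (ha : ‖a‖ < 1) (hz : ‖z‖ < 1) : ‖blaschkeFactor a z‖ < 1 := by
  rw [blaschkeFactor, norm_div, div_lt_one (norm_pos_iff.2 (one_sub_conj_mul_ne_zero ha hz.le)),
    ← pow_lt_pow_iff_left₀ (norm_nonneg _) (norm_nonneg _) two_ne_zero]
  have hz2 : 0 < 1 - ‖z‖ ^ 2 := by nlinarith [norm_nonneg z]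
  have ha2 : 0 < 1 - ‖a‖ ^ 2 := by nlinarith [norm_nonneg a]
  linarith [sq_norm_one_sub_conj_mul_sub_sq_norm_sub a z, mul_pos ha2 hz2]

theorem norm_blaschkeFactor_eq_one (ha : ‖a‖ < 1) (hz : ‖z‖ = 1) : ‖blaschkeFactor a z‖ = 1 := by
  rw [blaschkeFactor, norm_div, div_eq_one_iff_eq (norm_ne_zero_iff.2
    (one_sub_conj_mul_ne_zero ha hz.le)), ← sq_eq_sq₀ (norm_nonneg _) (norm_nonneg _)]
  linarith [hz ▸ sq_norm_one_sub_conj_mul_sub_sq_norm_sub a z]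

theorem differentiableAt_blaschkeFactor (ha : ‖a‖ < 1) (hz : ‖z‖ ≤ 1) :
    DifferentiableAt ℂ (blaschkeFactor a) z :=
  (differentiableAt_id.sub_const a).div ((differentiableAt_const 1).sub
    (differentiableAt_id.const_mul _)) (one_sub_conj_mul_ne_zero ha hz)

end BlaschkeFactor

namespace IsBlaschkeOf

variable {N : ℕ} {φ : ℂ → ℂ}

theorem isDiskSelfMap (hφ : IsBlaschkeOf N φ) (hN : N ≠ 0) : IsDiskSelfMap φ := by
  obtain ⟨u, a, hu, ha, hφ⟩ := hφ
  have hnorm : ∀ z, ‖φ z‖ = ∏ i, ‖blaschkeFactor (a i) z‖ := fun z => by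
    rw [hφ, norm_mul, hu, one_mul, norm_prod]; rfl
  have hφ' : φ = fun z => u * ∏ i, blaschkeFactor (a i) z := funext hφ
  have hdiff : DifferentiableOn ℂ φ (closedBall (0 : ℂ) 1) := fun z hz => by
    rw [hφ']
    exact ((DifferentiableAt.fun_finsetProd fun i _ => differentiableAt_blaschkeFactor (ha i)
      (mem_closedBall_zero_iff.1 hz)).const_mul u).differentiableWithinAt
  refine ⟨⟨hdiff.continuousOn, hdiff.mono ball_subset_closedBall⟩, fun z hz => ?_, fun z hz => ?_⟩
  · rw [mem_ball_zero_iff] at hz ⊢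
    let i₀ : Fin N := ⟨0, Nat.pos_of_ne_zero hN⟩
    calc ‖φ z‖ = ‖blaschkeFactor (a i₀) z‖ * ∏ i ∈ univ.erase i₀, ‖blaschkeFactor (a i) z‖ := by
          rw [hnorm, ← mul_prod_erase univ (fun i => ‖blaschkeFactor (a i) z‖) (mem_univ i₀)]
      _ ≤ ‖blaschkeFactor (a i₀) z‖ :=
          mul_le_of_le_one_right (norm_nonneg _) (prod_le_one (fun _ _ => norm_nonneg _)
            fun i _ => norm_blaschkeFactor_le_one (ha i) hz.le)
      _ < 1 := norm_blaschkeFactor_lt_one (ha i₀) hz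
  · rw [mem_sphere_zero_iff_norm] at hz ⊢
    rw [hnorm]
    exact prod_eq_one fun i _ => norm_blaschkeFactor_eq_one (ha i) hz

end IsBlaschkeOf

theorem one_sub_norm_le_norm_sub_of_mem_sphere {x : ℂ} (hx : x ∈ sphere (0 : ℂ) 1) (z₀ : ℂ) :
    1 - ‖z₀‖ ≤ ‖x - z₀‖ := by
  simpa [mem_sphere_zero_iff_norm.1 hx] using norm_sub_norm_le x z₀

theorem exists_mem_sphere_pow_le_prod_norm {ι : Type*} (t : Finset ι) {ψ : ι → ℂ → ℂ}
    (hψ : ∀ i ∈ t, IsDiskSelfMap (ψ i)) {z₀ : ℂ} (hz₀ : z₀ ∈ ball (0 : ℂ) 1)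
    (hfix : ∀ i ∈ t, ψ i z₀ = z₀) {f g : ℂ → ℂ} {s : ℕ} (hg : MemDiskAlgebra g)
    (hfg : ∀ z, f z = (z - z₀) ^ s * g z) :
    ∃ x ∈ sphere (0 : ℂ) 1, ((1 - ‖z₀‖) ^ s * ‖g z₀‖) ^ #t ≤ ∏ i ∈ t, ‖f (ψ i x)‖ := by
  set G : ℂ → ℂ := fun z => ∏ i ∈ t, g (ψ i z)
  have hG : MemDiskAlgebra G := MemDiskAlgebra.finsetProd fun i hi => hg.comp (hψ i hi)
  have hGz₀ : G z₀ = g z₀ ^ #t := by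
    rw [← prod_const]; exact prod_congr rfl fun i hi => by rw [hfix i hi]
  have hδ : 0 ≤ 1 - ‖z₀‖ := by linarith [mem_ball_zero_iff.1 hz₀]
  obtain ⟨x, hx, hGx⟩ := hG.exists_mem_sphere_norm_le (ball_subset_closedBall hz₀)
  refine ⟨x, hx, ?_⟩
  calc ((1 - ‖z₀‖) ^ s * ‖g z₀‖) ^ #t = (1 - ‖z₀‖) ^ (s * #t) * ‖G z₀‖ := by
        rw [hGz₀, norm_pow, mul_pow, pow_mul]
    _ ≤ (1 - ‖z₀‖) ^ (s * #t) * ‖G x‖ := by gcongr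
    _ = ∏ i ∈ t, (1 - ‖z₀‖) ^ s * ‖g (ψ i x)‖ := by
        rw [norm_prod, prod_mul_distrib, prod_const, pow_mul]
    _ ≤ ∏ i ∈ t, ‖f (ψ i x)‖ := by
        refine prod_le_prod (fun i _ => by positivity) fun i hi => ?_
        rw [hfg, norm_mul, norm_pow]
        gcongr
        exact one_sub_norm_le_norm_sub_of_mem_sphere ((hψ i hi).mapsTo_sphere hx) z₀

theorem le_liminf_rpow_one_div_of_pow_le {a : ℕ → ℝ} {c M : ℝ} (hc : 0 ≤ c)
    (hlow : ∀ n, c ^ n ≤ a n) (hup : ∀ n, a n ≤ M ^ n) :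
    c ≤ liminf (fun n : ℕ => a n ^ ((1 : ℝ) / n)) atTop := by
  have ha : ∀ n, 0 ≤ a n := fun n => (pow_nonneg hc n).trans (hlow n)
  have hM : 0 ≤ M := (ha 1).trans (by simpa using hup 1)
  have hroot : ∀ n : ℕ, n ≠ 0 → c ≤ a n ^ ((1 : ℝ) / n) ∧ a n ^ ((1 : ℝ) / n) ≤ M := by
    intro n hn
    have hn' : (0 : ℝ) < n := Nat.cast_pos.2 (Nat.pos_of_ne_zero hn)
    rw [one_div, Real.le_rpow_inv_iff_of_pos hc (ha n) hn',
      Real.rpow_inv_le_iff_of_pos (ha n) hM hn', Real.rpow_natCast, Real.rpow_natCast]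
    exact ⟨hlow n, hup n⟩
  refine le_liminf_of_le (isBoundedUnder_of ⟨max M 1, fun n => ?_⟩).isCoboundedUnder_ge
    (eventually_ne_atTop 0 |>.mono fun n hn => (hroot n hn).1)
  rcases eq_or_ne n 0 with rfl | hn
  · simp
  · exact (hroot n hn).2.trans (le_max_left M 1)

/-- if `φ` is a nontrivial elliptic finite Blaschke product and `f ∈ A(𝔻)`
is not identically zero, then for every `k ≥ 1`,
`liminf_n (sup_{x ∈ 𝕋} ∏_{j<n} |f(φ^{kj}(x))|)^{1/n} > 0`. -/
theorem elliptic_liminf_pos (φ f : ℂ → ℂ) (hφ : NontrivialBlaschke φ) (hell : Elliptic φ)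
    (hf : MemDiskAlgebra f) (hfne : ∃ z ∈ closedBall (0 : ℂ) 1, f z ≠ 0) :
    ∀ k : ℕ, 1 ≤ k →
      0 < Filter.liminf (fun n : ℕ =>
        (sSup ((fun x => ∏ j ∈ Finset.range n, ‖f (φ^[k * j] x)‖) ''
          sphere (0 : ℂ) 1)) ^ ((1 : ℝ) / n)) Filter.atTop := by
  intro k _
  obtain ⟨N, hN, hB⟩ := hφ
  obtain ⟨z₀, hz₀, hfix⟩ := hell
  have hφk : ∀ j, IsDiskSelfMap φ^[k * j] := fun j => (hB.isDiskSelfMap (by omega)).iterate _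
  obtain ⟨s, g, hg, hgz₀, hfg⟩ := hf.exists_eq_pow_mul hfne hz₀
  obtain ⟨M, hM⟩ := (isCompact_closedBall (0 : ℂ) 1).exists_bound_of_continuousOn hf.1
  have hbound : ∀ n, ∀ x ∈ sphere (0 : ℂ) 1, ∏ j ∈ range n, ‖f (φ^[k * j] x)‖ ≤ M ^ n := by
    intro n x hx
    refine (prod_le_prod (fun _ _ => norm_nonneg _) fun j _ =>
      hM _ ((hφk j).mapsTo_closedBall (sphere_subset_closedBall hx))).trans_eq ?_
    rw [prod_const, card_range]
  have hc : 0 < (1 - ‖z₀‖) ^ s * ‖g z₀‖ :=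
    mul_pos (pow_pos (by linarith [mem_ball_zero_iff.1 hz₀]) s) (norm_pos_iff.2 hgz₀)
  refine hc.trans_le (le_liminf_rpow_one_div_of_pow_le (M := M) hc.le (fun n => ?_) (fun n => ?_))
  · obtain ⟨x, hx, hle⟩ := exists_mem_sphere_pow_le_prod_norm (range n) (fun j _ => hφk j) hz₀
      (fun j _ => iterate_fixed hfix _) hg hfg
    rw [card_range] at hle
    exact hle.trans (le_csSup ⟨M ^ n, forall_mem_image.2 (hbound n)⟩ (mem_image_of_mem _ hx))
  · exact csSup_le ((NormedSpace.sphere_nonempty.2 zero_le_one).image _)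
      (forall_mem_image.2 (hbound n))
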